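/- Consider the independent-set selection problem for external adjacencies between two regions: given an outerplanar internal-adjacency graph on one side with vertex weights equal to external-adjacency degrees, first compute an exact maximum-weight independent set I on that side, then compute an exact maximum-weight independent set on the other side with respect to only the external adjacencies into I. The number of external adjacencies preserved by this procedure is at least one third of the maximum number preservable by any pair of independent sets; i.e., the procedure is a 1/3-approximation. -/

import Mathlib

open scoped BigOperators

/-- A graph is outerplanar iff it can be drawn with all vertices placed (injectively) on the
unit circle and edges drawn as pairwise non-crossing chords: two chords of distinct edges
never meet in a point interior to both. -/
def IsOuterplanar {V : Type} (G : SimpleGraph V) : Prop :=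
  ∃ pos : V → EuclideanSpace ℝ (Fin 2),
    Function.Injective pos ∧ (∀ v : V, ‖pos v‖ = 1) ∧
    ∀ a b c d : V, G.Adj a b → G.Adj c d → ({a, b} : Set V) ≠ {c, d} →
      openSegment ℝ (pos a) (pos b) ∩ openSegment ℝ (pos c) (pos d) = ∅

/-- A maximal outerplanar graph: outerplanar, and no edge can be added while keeping the
graph outerplanar. -/
def IsMaximalOuterplanar {V : Type} (G : SimpleGraph V) : Prop :=
  IsOuterplanar G ∧ ∀ H : SimpleGraph V, G ≤ H → G ≠ H → ¬ IsOuterplanar H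

/-- An independent set of a graph. -/
def IsIndepSet {V : Type} (G : SimpleGraph V) (I : Finset V) : Prop :=
  ∀ i ∈ I, ∀ j ∈ I, ¬ G.Adj i j

variable {A B : Type} [Fintype A] [Fintype B] [DecidableEq A] [DecidableEq B]

/-- The number of external adjacency edges of `E` preserved by the pair of selections
`(IA, IB)`. -/
def preservedCount (E : Finset (A × B)) (IA : Finset A) (IB : Finset B) : ℕ :=
  (E.filter (fun e => e.1 ∈ IA ∧ e.2 ∈ IB)).card

/-! Reading off the angles of the vertices in an outerplanar drawing orders them so that no two
edges interleave, since chords between interleaved points of a circle cross. In such an order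
the first vertex strictly inside an innermost edge has at most one neighbour on either side, so
outerplanar graphs are 2-degenerate, hence 3-colourable, and the heaviest colour class carries
a third of any vertex weighting. Weighting `B` by the edges into `IA`, the second stage keeps at
least a third of the weight of `IA`, which by maximality of `IA` bounds every feasible pair. -/

open Finset Real

namespace Real

lemma sin_add_lt_sin_add_sin {u w : ℝ} (hu : 0 < u) (hw : 0 < w) (huw : u + w < 2 * π) :
    sin (u + w) < sin u + sin w := by
  obtain ⟨x, rfl⟩ : ∃ x, u = 2 * x := ⟨u / 2, by ring⟩
  obtain ⟨y, rfl⟩ : ∃ y, w = 2 * y := ⟨w / 2, by ring⟩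
  have hx : 0 < sin x := sin_pos_of_pos_of_lt_pi (by linarith) (by linarith)
  have hy : 0 < sin y := sin_pos_of_pos_of_lt_pi (by linarith) (by linarith)
  have hxy : 0 < sin (x + y) := sin_pos_of_pos_of_lt_pi (by linarith) (by linarith)
  have key : sin (2 * x) + sin (2 * y) - sin (2 * x + 2 * y) =
      4 * sin x * sin y * sin (x + y) := by
    rw [← mul_add, sin_two_mul, sin_two_mul, sin_two_mul, sin_add, cos_add]
    linear_combination (-2 * sin x * cos x) * sin_sq_add_cos_sq y
      - 2 * sin y * cos y * sin_sq_add_cos_sq x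
  have := mul_pos (mul_pos hx hy) hxy
  linarith

end Real

noncomputable def circlePoint (t : ℝ) : EuclideanSpace ℝ (Fin 2) := !₂[cos t, sin t]

lemma norm_circlePoint (t : ℝ) : ‖circlePoint t‖ = 1 := by
  simp [circlePoint, EuclideanSpace.norm_eq]

lemma exists_circlePoint_eq {p : EuclideanSpace ℝ (Fin 2)} (hp : ‖p‖ = 1) :
    ∃ t ∈ Set.Ioc (-π) π, circlePoint t = p := by
  obtain ⟨z, rfl⟩ : ∃ z, Complex.orthonormalBasisOneI.repr z = p :=
    ⟨_, LinearIsometryEquiv.apply_symm_apply _ p⟩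
  rw [LinearIsometryEquiv.norm_map] at hp
  have hz : z ≠ 0 := by rintro rfl; simp at hp
  refine ⟨z.arg, ⟨Complex.neg_pi_lt_arg z, Complex.arg_le_pi z⟩, ?_⟩
  ext i
  fin_cases i
  · simp [circlePoint, Complex.cos_arg hz, hp]
  · simp [circlePoint, Complex.sin_arg, hp]

def planeDet (v w : EuclideanSpace ℝ (Fin 2)) : ℝ := v 0 * w 1 - v 1 * w 0

lemma planeDet_circlePoint (t₁ t₃ t : ℝ) :
    planeDet (circlePoint t₃ - circlePoint t₁) (circlePoint t - circlePoint t₁) =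
      sin (t - t₃) + sin (t₃ - t₁) - sin (t - t₁) := by
  simp only [planeDet, circlePoint, PiLp.sub_apply, Matrix.cons_val_zero, Matrix.cons_val_one,
    Matrix.cons_val_fin_one, sin_sub]
  ring

lemma planeDet_smul_add_smul_sub (v x y p : EuclideanSpace ℝ (Fin 2)) (s : ℝ) :
    planeDet v (s • x + (1 - s) • y - p) =
      s * planeDet v (x - p) + (1 - s) * planeDet v (y - p) := by
  simp only [planeDet, PiLp.sub_apply, PiLp.add_apply, PiLp.smul_apply, smul_eq_mul]
  ring

lemma exists_eq_smul_of_planeDet_eq_zero {v w : EuclideanSpace ℝ (Fin 2)} (hv : v ≠ 0)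
    (h : planeDet v w = 0) : ∃ k : ℝ, w = k • v := by
  have hv' : v 0 ^ 2 + v 1 ^ 2 ≠ 0 := by
    simpa [EuclideanSpace.real_norm_sq_eq] using pow_ne_zero 2 (norm_ne_zero_iff.2 hv)
  refine ⟨(v 0 * w 0 + v 1 * w 1) / (v 0 ^ 2 + v 1 ^ 2), ?_⟩
  unfold planeDet at h
  ext i
  fin_cases i <;> simp only [Fin.zero_eta, Fin.mk_one, PiLp.smul_apply, smul_eq_mul] <;> field_simp
  · linear_combination (-v 1) * h
  · linear_combination v 0 * h

lemma mem_openSegment_of_planeDet_eq_zero {x y q : EuclideanSpace ℝ (Fin 2)} (hx : ‖x‖ = 1)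
    (hy : ‖y‖ = 1) (hxy : x ≠ y) (hq : ‖q‖ < 1) (h : planeDet (y - x) (q - x) = 0) :
    q ∈ openSegment ℝ x y := by
  obtain ⟨k, hk⟩ := exists_eq_smul_of_planeDet_eq_zero (sub_ne_zero.2 hxy.symm) h
  have hline : q ∈ line[ℝ, x, y] := by
    convert AffineMap.lineMap_mem_affineSpan_pair k x y
    rw [AffineMap.lineMap_apply, vsub_eq_sub, vadd_eq_add, ← hk, sub_add_cancel]
  have hcol : Collinear ℝ {x, q, y} := by
    rw [Set.insert_comm]
    exact collinear_insert_of_mem_affineSpan_pair hline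
  rw [openSegment_eq_image_lineMap]
  refine (hcol.sbtw_of_dist_eq_of_dist_lt (p := 0) (r := 1) ?_ ?_ ?_ hxy).mem_image_Ioo
  all_goals simpa

theorem openSegment_inter_nonempty_of_planeDet_neg_of_pos
    {p₁ p₂ p₃ p₄ : EuclideanSpace ℝ (Fin 2)}
    (h₁ : ‖p₁‖ = 1) (h₂ : ‖p₂‖ = 1) (h₃ : ‖p₃‖ = 1) (h₄ : ‖p₄‖ = 1)
    (hside₂ : planeDet (p₃ - p₁) (p₂ - p₁) < 0) (hside₄ : 0 < planeDet (p₃ - p₁) (p₄ - p₁)) :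
    (openSegment ℝ p₁ p₃ ∩ openSegment ℝ p₂ p₄).Nonempty := by
  obtain ⟨s, hs₀, hs₁, hs⟩ : ∃ s : ℝ, 0 < s ∧ s < 1 ∧
      s * planeDet (p₃ - p₁) (p₂ - p₁) + (1 - s) * planeDet (p₃ - p₁) (p₄ - p₁) = 0 := by
    generalize planeDet (p₃ - p₁) (p₂ - p₁) = a at hside₂ ⊢
    generalize planeDet (p₃ - p₁) (p₄ - p₁) = b at hside₄ ⊢
    have hba : 0 < b - a := by linarith
    exact ⟨b / (b - a), div_pos hside₄ hba, (div_lt_one hba).2 (by linarith),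
      by field_simp [hba.ne']; ring⟩
  have h₁₃ : p₁ ≠ p₃ := fun h => by simp [h, planeDet] at hside₂
  have h₂₄ : p₂ ≠ p₄ := fun h => by rw [h] at hside₂; linarith
  refine ⟨s • p₂ + (1 - s) • p₄, mem_openSegment_of_planeDet_eq_zero h₁ h₃ h₁₃ ?_
      (by rwa [planeDet_smul_add_smul_sub]), ⟨s, 1 - s, hs₀, by linarith, by ring, rfl⟩⟩
  exact norm_combo_lt_of_ne h₂.le h₄.le h₂₄ hs₀ (by linarith) (by ring)

theorem openSegment_circlePoint_inter_nonempty {t₁ t₂ t₃ t₄ : ℝ} (h₁₂ : t₁ < t₂)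
    (h₂₃ : t₂ < t₃) (h₃₄ : t₃ < t₄) (h₄₁ : t₄ < t₁ + 2 * π) :
    (openSegment ℝ (circlePoint t₁) (circlePoint t₃) ∩
      openSegment ℝ (circlePoint t₂) (circlePoint t₄)).Nonempty := by
  refine openSegment_inter_nonempty_of_planeDet_neg_of_pos (norm_circlePoint _)
    (norm_circlePoint _) (norm_circlePoint _) (norm_circlePoint _) ?_ ?_
  · have := sin_add_lt_sin_add_sin (sub_pos.2 h₁₂) (sub_pos.2 h₂₃) (by linarith)
    rw [sub_add_sub_cancel'] at this
    rw [planeDet_circlePoint, ← neg_sub t₃ t₂, sin_neg]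
    linarith
  · have := sin_add_lt_sin_add_sin (sub_pos.2 h₃₄) (sub_pos.2 (h₁₂.trans h₂₃)) (by linarith)
    rw [sub_add_sub_cancel] at this
    rw [planeDet_circlePoint]
    linarith

section NoncrossingOrder

variable {V α : Type*} [LinearOrder α] {θ : V → α}

def strictlyBetween (S : Finset V) (θ : V → α) (a b : V) : Finset V :=
  {x ∈ S | θ a < θ x ∧ θ x < θ b}

lemma mem_strictlyBetween {S : Finset V} {a b x : V} :
    x ∈ strictlyBetween S θ a b ↔ x ∈ S ∧ θ a < θ x ∧ θ x < θ b :=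
  mem_filter

namespace SimpleGraph

variable {G : SimpleGraph V}

structure IsNoncrossingOrder (G : SimpleGraph V) (θ : V → α) : Prop where
  injective : Function.Injective θ
  not_adj_of_lt_of_lt_of_lt ⦃a b c d : V⦄ :
    θ a < θ b → θ b < θ c → θ c < θ d → G.Adj a c → ¬ G.Adj b d

def NeighborsStraddle (G : SimpleGraph V) (θ : V → α) (S : Finset V) (c : V) : Prop :=
  ∀ ⦃d₁⦄, d₁ ∈ S → ∀ ⦃d₂⦄, d₂ ∈ S → G.Adj c d₁ → G.Adj c d₂ → θ d₁ < θ d₂ →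
    θ d₁ < θ c ∧ θ c < θ d₂

lemma NeighborsStraddle.card_le_two [DecidableRel G.Adj] {S : Finset V} {c : V}
    (hθ : Function.Injective θ) (h : G.NeighborsStraddle θ S c) :
    #{d ∈ S | G.Adj c d} ≤ 2 := by
  have hinj : Set.InjOn (fun d => decide (θ d < θ c)) ({d ∈ S | G.Adj c d} : Finset V) := by
    intro d₁ hd₁ d₂ hd₂ hside
    simp only [coe_filter, Set.mem_ofPred_eq] at hd₁ hd₂
    rcases lt_trichotomy (θ d₁) (θ d₂) with hlt | heq | hlt
    · have := h hd₁.1 hd₂.1 hd₁.2 hd₂.2 hlt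
      simp [this.1, this.2.not_gt] at hside
    · exact hθ heq
    · have := h hd₂.1 hd₁.1 hd₂.2 hd₁.2 hlt
      simp [this.1, this.2.not_gt] at hside
  simpa using card_le_card_of_injOn _ (fun _ _ => mem_univ _) hinj

lemma neighborsStraddle_of_forall_strictlyBetween_eq_empty (hθ : Function.Injective θ)
    {S : Finset V} (hS : ∀ a ∈ S, ∀ b ∈ S, G.Adj a b → strictlyBetween S θ a b = ∅)
    {c : V} (hc : c ∈ S) : G.NeighborsStraddle θ S c := by
  intro d₁ hd₁ d₂ hd₂ h₁ h₂ h₁₂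
  constructor
  · by_contra! h
    have hc₁ : θ c < θ d₁ := h.lt_of_ne fun h' => h₁.ne (hθ h')
    have := hS c hc d₂ hd₂ h₂ ▸ mem_strictlyBetween.2 ⟨hd₁, hc₁, h₁₂⟩
    simp at this
  · by_contra! h
    have h₂c : θ d₂ < θ c := h.lt_of_ne fun h' => h₂.ne (hθ h').symm
    have := hS d₁ hd₁ c hc h₁.symm ▸ mem_strictlyBetween.2 ⟨hd₂, h₁₂, h₂c⟩
    simp at this

namespace IsNoncrossingOrder

lemma neighborsStraddle_of_innermost (hG : G.IsNoncrossingOrder θ) {S : Finset V} {a b c : V}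
    (hab : G.Adj a b) (hc : c ∈ strictlyBetween S θ a b)
    (hc_min : ∀ x ∈ strictlyBetween S θ a b, θ c ≤ θ x)
    (h_innermost : ∀ y ∈ S, G.Adj c y → (strictlyBetween S θ c y).Nonempty →
      #(strictlyBetween S θ a b) ≤ #(strictlyBetween S θ c y)) :
    G.NeighborsStraddle θ S c := by
  obtain ⟨-, hac, hcb⟩ := mem_strictlyBetween.1 hc
  have below : ∀ d ∈ S, G.Adj c d → θ d < θ c → d = a := by
    intro d hd hcd hdc
    rcases lt_trichotomy (θ d) (θ a) with hda | hda | hda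
    · exact (hG.not_adj_of_lt_of_lt_of_lt hda hac hcb hcd.symm hab).elim
    · exact hG.injective hda
    · exact (hdc.not_ge (hc_min d (mem_strictlyBetween.2 ⟨hd, hda, hdc.trans hcb⟩))).elim
  have above : ∀ d ∈ S, G.Adj c d → θ c < θ d → θ d ≤ θ b := by
    intro d hd hcd hcd'
    by_contra! hbd
    exact hG.not_adj_of_lt_of_lt_of_lt hac hcb hbd hab hcd
  intro d₁ hd₁ d₂ hd₂ h₁ h₂ h₁₂
  constructor
  · by_contra! h
    have hc₁ : θ c < θ d₁ := h.lt_of_ne fun h' => h₁.ne (hG.injective h')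
    -- the edge `c d₂` encloses `d₁`, but fewer vertices than `a b`
    have hsub : strictlyBetween S θ c d₂ ⊂ strictlyBetween S θ a b := by
      refine (ssubset_iff_of_subset fun x hx => ?_).2
        ⟨c, hc, fun h => lt_irrefl _ (mem_strictlyBetween.1 h).2.1⟩
      obtain ⟨hxS, hcx, hxd₂⟩ := mem_strictlyBetween.1 hx
      exact mem_strictlyBetween.2
        ⟨hxS, hac.trans hcx, hxd₂.trans_le (above d₂ hd₂ h₂ (hc₁.trans h₁₂))⟩
    exact (h_innermost d₂ hd₂ h₂ ⟨d₁, mem_strictlyBetween.2 ⟨hd₁, hc₁, h₁₂⟩⟩).not_gt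
      (card_lt_card hsub)
  · by_contra! h
    have h₂c : θ d₂ < θ c := h.lt_of_ne fun h' => h₂.ne (hG.injective h').symm
    rw [below d₁ hd₁ h₁ (h₁₂.trans h₂c), below d₂ hd₂ h₂ h₂c] at h₁₂
    exact lt_irrefl _ h₁₂

lemma exists_neighborsStraddle (hG : G.IsNoncrossingOrder θ) {S : Finset V}
    (hS : S.Nonempty) : ∃ c ∈ S, G.NeighborsStraddle θ S c := by
  classical
  set P := {p ∈ S ×ˢ S | G.Adj p.1 p.2 ∧ (strictlyBetween S θ p.1 p.2).Nonempty}
  rcases P.eq_empty_or_nonempty with hP | hP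
  · obtain ⟨c, hc⟩ := hS
    refine ⟨c, hc, neighborsStraddle_of_forall_strictlyBetween_eq_empty hG.injective
      (fun a ha b hb hab => ?_) hc⟩
    by_contra h
    have : (a, b) ∈ P := mem_filter.2 ⟨mem_product.2 ⟨ha, hb⟩, hab, nonempty_iff_ne_empty.2 h⟩
    simp [hP] at this
  · obtain ⟨⟨a, b⟩, hp, hmin⟩ := P.exists_min_image (fun p => #(strictlyBetween S θ p.1 p.2)) hP
    obtain ⟨-, hab, hne⟩ := mem_filter.1 hp
    obtain ⟨c, hc, hc_min⟩ := (strictlyBetween S θ a b).exists_min_image θ hne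
    have hcS := (mem_strictlyBetween.1 hc).1
    exact ⟨c, hcS, hG.neighborsStraddle_of_innermost hab hc hc_min
      fun y hy hcy hne' => hmin (c, y) (mem_filter.2 ⟨mem_product.2 ⟨hcS, hy⟩, hcy, hne'⟩)⟩

end IsNoncrossingOrder

theorem colorable_of_forall_exists_card_adj_le [Fintype V] [DecidableRel G.Adj] {k : ℕ}
    (h : ∀ S : Finset V, S.Nonempty → ∃ v ∈ S, #{w ∈ S | G.Adj v w} ≤ k) :
    G.Colorable (k + 1) := by
  classical
  suffices ∀ S : Finset V, ∃ f : V → Fin (k + 1), ∀ u ∈ S, ∀ v ∈ S, G.Adj u v → f u ≠ f v by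
    obtain ⟨f, hf⟩ := this univ
    exact ⟨Coloring.mk f fun huv => hf _ (mem_univ _) _ (mem_univ _) huv⟩
  intro S
  induction S using Finset.strongInduction with
  | H S ih =>
  rcases S.eq_empty_or_nonempty with rfl | hS
  · exact ⟨0, by simp⟩
  obtain ⟨v, hv, hdeg⟩ := h S hS
  obtain ⟨f, hf⟩ := ih _ (erase_ssubset hv)
  obtain ⟨c, -, hc⟩ := exists_mem_notMem_of_card_lt_card
    (s := image f {w ∈ S | G.Adj v w}) (t := univ)
    (by simpa using card_image_le.trans_lt (Nat.lt_succ_of_le hdeg))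
  have hv_ne : ∀ y ∈ S, G.Adj v y → Function.update f v c v ≠ Function.update f v c y := by
    intro y hy hvy
    rw [Function.update_self, Function.update_of_ne hvy.ne']
    exact fun h => hc (h ▸ mem_image_of_mem f (mem_filter.2 ⟨hy, hvy⟩))
  refine ⟨Function.update f v c, fun x hx y hy hxy => ?_⟩
  by_cases hxv : x = v
  · subst hxv
    exact hv_ne y hy hxy
  by_cases hyv : y = v
  · subst hyv
    exact (hv_ne x hx hxy.symm).symm
  rw [Function.update_of_ne hxv, Function.update_of_ne hyv]
  exact hf x (mem_erase.2 ⟨hxv, hx⟩) y (mem_erase.2 ⟨hyv, hy⟩) hxy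

end SimpleGraph

end NoncrossingOrder

theorem exists_isIndepSet_sum_le_of_colorable {V : Type} [Fintype V] {G : SimpleGraph V}
    {n : ℕ} (hG : G.Colorable n)
    {M : Type*} [AddCommMonoid M] [LinearOrder M] [IsOrderedAddMonoid M] (w : V → M) :
    ∃ J : Finset V, IsIndepSet G J ∧ ∑ v, w v ≤ n • ∑ v ∈ J, w v := by
  classical
  obtain ⟨C⟩ := hG
  cases isEmpty_or_nonempty V
  · exact ⟨∅, by simp [IsIndepSet], by simp⟩
  have : Nonempty (Fin n) := ⟨C (Classical.arbitrary V)⟩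
  obtain ⟨i, -, hi⟩ := exists_max_image univ (fun i => ∑ v with C v = i, w v) univ_nonempty
  refine ⟨({v | C v = i} : Finset V), fun x hx y hy hxy => C.valid hxy ?_, ?_⟩
  · rw [(mem_filter.1 hx).2, (mem_filter.1 hy).2]
  calc ∑ v, w v = ∑ j, ∑ v with C v = j, w v := (sum_fiberwise univ C w).symm
    _ ≤ ∑ _j : Fin n, ∑ v with C v = i, w v := sum_le_sum fun j _ => hi j (mem_univ j)
    _ = n • ∑ v with C v = i, w v := by simp

theorem IsOuterplanar.exists_isNoncrossingOrder {V : Type} {G : SimpleGraph V}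
    (h : IsOuterplanar G) : ∃ θ : V → ℝ, G.IsNoncrossingOrder θ := by
  obtain ⟨pos, hpos, hnorm, hdisj⟩ := h
  choose θ hθ hpos_eq using fun v => exists_circlePoint_eq (hnorm v)
  refine ⟨θ, ⟨fun u v huv => hpos (by rw [← hpos_eq, huv, hpos_eq]), ?_⟩⟩
  intro a b c d hab hbc hcd hac hbd
  have hne : ({a, c} : Set V) ≠ {b, d} := fun h => by
    rcases h ▸ Set.mem_insert a {c} with rfl | rfl
    · exact hab.ne rfl
    · exact (hab.trans (hbc.trans hcd)).ne rfl
  have := openSegment_circlePoint_inter_nonempty hab hbc hcd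
    (by linarith [(hθ d).2, (hθ a).1])
  simp only [hpos_eq, hdisj a c b d hac hbd hne] at this
  exact Set.not_nonempty_empty this

theorem IsOuterplanar.colorable_three {V : Type} [Fintype V] {G : SimpleGraph V}
    (h : IsOuterplanar G) : G.Colorable 3 := by
  classical
  obtain ⟨θ, hθ⟩ := h.exists_isNoncrossingOrder
  refine SimpleGraph.colorable_of_forall_exists_card_adj_le fun S hS => ?_
  obtain ⟨c, hc, hstraddle⟩ := hθ.exists_neighborsStraddle hS
  exact ⟨c, hc, hstraddle.card_le_two hθ.injective⟩

section preservedCount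

variable {X Y : Type} [DecidableEq X] [DecidableEq Y]

def externalDegree (E : Finset (X × Y)) (I : Finset X) (b : Y) : ℕ :=
  #{e ∈ E | e.1 ∈ I ∧ e.2 = b}

lemma preservedCount_le_card_filter (E : Finset (X × Y)) (I : Finset X) (J : Finset Y) :
    preservedCount E I J ≤ #{e ∈ E | e.1 ∈ I} :=
  card_le_card fun _ he => mem_filter.2 ⟨(mem_filter.1 he).1, (mem_filter.1 he).2.1⟩

lemma preservedCount_eq_sum (E : Finset (X × Y)) (I : Finset X) (J : Finset Y) :
    preservedCount E I J = ∑ b ∈ J, externalDegree E I b := by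
  rw [preservedCount, card_eq_sum_card_fiberwise fun e he => (mem_filter.1 he).2.2]
  refine sum_congr rfl fun b hb => congrArg card ?_
  rw [filter_filter]
  exact filter_congr fun e _ => ⟨fun h => ⟨h.1.1, h.2⟩, fun h => ⟨⟨h.1, h.2 ▸ hb⟩, h.2⟩⟩

lemma preservedCount_univ [Fintype Y] (E : Finset (X × Y)) (I : Finset X) :
    preservedCount E I univ = #{e ∈ E | e.1 ∈ I} := by
  simp [preservedCount]

end preservedCount

theorem two_stage_independent_set_third_approximation_general
    (GA : SimpleGraph A) (GB : SimpleGraph B)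
    (hGB : IsOuterplanar GB)
    (E : Finset (A × B)) (IA : Finset A) (IB : Finset B)
    (hIAmax : ∀ J : Finset A, IsIndepSet GA J →
      (E.filter (fun e => e.1 ∈ J)).card ≤ (E.filter (fun e => e.1 ∈ IA)).card)
    (hIBmax : ∀ J : Finset B, IsIndepSet GB J →
      preservedCount E IA J ≤ preservedCount E IA IB) :
    ∀ (JA : Finset A) (JB : Finset B), IsIndepSet GA JA → IsIndepSet GB JB →
      preservedCount E JA JB ≤ 3 * preservedCount E IA IB := by
  intro JA JB hJA _
  obtain ⟨J, hJ, hJw⟩ :=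
    exists_isIndepSet_sum_le_of_colorable hGB.colorable_three (externalDegree E IA)
  calc preservedCount E JA JB ≤ #{e ∈ E | e.1 ∈ JA} := preservedCount_le_card_filter E JA JB
    _ ≤ #{e ∈ E | e.1 ∈ IA} := hIAmax JA hJA
    _ = ∑ b, externalDegree E IA b := by rw [← preservedCount_univ, preservedCount_eq_sum]
    _ ≤ 3 • ∑ b ∈ J, externalDegree E IA b := hJw
    _ = 3 * preservedCount E IA J := by rw [smul_eq_mul, preservedCount_eq_sum]
    _ ≤ 3 * preservedCount E IA IB := Nat.mul_le_mul_left 3 (hIBmax J hJ)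

/-- Two-stage heuristic for preserving external adjacencies between two
regions.  Let `GA`, `GB` be the (outerplanar) internal adjacency graphs on the two sides and
`E` the set of external adjacency edges.  Suppose `IA` is a maximum-weight independent set
in `GA`, the weight of a vertex being its degree in `E`, and `IB` is then an independent set
in `GB` maximizing the number of edges of `E` into `IA` that are preserved.  Then the number
of external adjacencies preserved by `(IA, IB)` is at least one third of the number
preserved by any feasible pair of independent sets: the procedure is a 1/3-approximation. -/
theorem two_stage_independent_set_third_approximation
    (GA : SimpleGraph A) (GB : SimpleGraph B)
    (hGA : IsOuterplanar GA) (hGB : IsOuterplanar GB)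
    (E : Finset (A × B)) (IA : Finset A) (IB : Finset B)
    (hIA : IsIndepSet GA IA)
    (hIAmax : ∀ J : Finset A, IsIndepSet GA J →
      (E.filter (fun e => e.1 ∈ J)).card ≤ (E.filter (fun e => e.1 ∈ IA)).card)
    (hIB : IsIndepSet GB IB)
    (hIBmax : ∀ J : Finset B, IsIndepSet GB J →
      preservedCount E IA J ≤ preservedCount E IA IB) :
    ∀ (JA : Finset A) (JB : Finset B), IsIndepSet GA JA → IsIndepSet GB JB →
      preservedCount E JA JB ≤ 3 * preservedCount E IA IB :=
  two_stage_independent_set_third_approximation_general GA GB hGB E IA IB hIAmax hIBmax
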